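/- Let Q be a symmetric positive semidefinite n×n real matrix, s, α ∈ ℝⁿ, g = Qα − s, and d, p_prev ∈ ℝⁿ with gᵀp_prev = 0, dᵀQd > 0 and p_prevᵀQp_prev > 0. Let γ* = −(dᵀQp_prev)/(p_prevᵀQp_prev), p = d + γ* p_prev, assume pᵀQp > 0, and let ρ* = −(gᵀd)/(pᵀQp). If κ > 0 satisfies dᵀQd ≤ 1/(2κ), then the unclipped conjugate SMO iteration gains at least κ times the squared directional derivative: Θ(α) − Θ(α + ρ* p) ≥ κ (gᵀd)². -/

import Mathlib

open Matrix

/-!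
Along a line `α + ρ p` the objective is a parabola in `ρ`, so the exact line search gains
`(gᵀp)² / (2 pᵀQp)`. Orthogonality `gᵀp_prev = 0` gives `gᵀp = gᵀd`, and conjugating `d` against
`p_prev` only lowers the curvature: `pᵀQp = dᵀQd - (dᵀQp_prev)² / p_prevᵀQp_prev ≤ dᵀQd ≤ 1/(2κ)`.
-/

namespace Matrix

variable {ι : Type*} [Fintype ι]

lemma IsSymm.dotProduct_mulVec_comm {Q : Matrix ι ι ℝ} (hQ : Q.IsSymm) (x y : ι → ℝ) :
    x ⬝ᵥ Q *ᵥ y = y ⬝ᵥ Q *ᵥ x := by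
  simpa only [hQ.eq] using dotProduct_transpose_mulVec Q x y

lemma IsSymm.dotProduct_mulVec_add_smul {Q : Matrix ι ι ℝ} (hQ : Q.IsSymm) (x y : ι → ℝ)
    (r : ℝ) :
    (x + r • y) ⬝ᵥ Q *ᵥ (x + r • y) =
      x ⬝ᵥ Q *ᵥ x + 2 * r * (x ⬝ᵥ Q *ᵥ y) + r ^ 2 * (y ⬝ᵥ Q *ᵥ y) := by
  simp only [mulVec_add, mulVec_smul, dotProduct_add, add_dotProduct, dotProduct_smul,
    smul_dotProduct, smul_eq_mul, hQ.dotProduct_mulVec_comm y x]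
  ring

noncomputable def dualObjective (Q : Matrix ι ι ℝ) (s β : ι → ℝ) : ℝ :=
  (1 / 2) * (β ⬝ᵥ Q *ᵥ β) - s ⬝ᵥ β

lemma IsSymm.dualObjective_add_smul {Q : Matrix ι ι ℝ} (hQ : Q.IsSymm) (s α p : ι → ℝ)
    (ρ : ℝ) :
    dualObjective Q s (α + ρ • p) =
      dualObjective Q s α + ρ * ((Q *ᵥ α - s) ⬝ᵥ p) + ρ ^ 2 / 2 * (p ⬝ᵥ Q *ᵥ p) := by
  have hαp : (Q *ᵥ α) ⬝ᵥ p = α ⬝ᵥ Q *ᵥ p := by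
    rw [dotProduct_comm, hQ.dotProduct_mulVec_comm]
  simp only [dualObjective, hQ.dotProduct_mulVec_add_smul, sub_dotProduct, hαp,
    dotProduct_add, dotProduct_smul, smul_eq_mul]
  ring

-- When `pᵀQp = 0` both sides are `0` by the convention `x / 0 = 0`.
lemma IsSymm.dualObjective_sub_exact_step {Q : Matrix ι ι ℝ} (hQ : Q.IsSymm) (s α p : ι → ℝ) :
    dualObjective Q s α -
        dualObjective Q s (α + (-((Q *ᵥ α - s) ⬝ᵥ p) / (p ⬝ᵥ Q *ᵥ p)) • p) =
      ((Q *ᵥ α - s) ⬝ᵥ p) ^ 2 / (2 * (p ⬝ᵥ Q *ᵥ p)) := by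
  rw [hQ.dualObjective_add_smul]
  rcases eq_or_ne (p ⬝ᵥ Q *ᵥ p) 0 with hA | hA
  · simp [hA]
  · field_simp
    ring

lemma IsSymm.dotProduct_mulVec_conjugate {Q : Matrix ι ι ℝ} (hQ : Q.IsSymm) (d q : ι → ℝ) :
    (d + (-(d ⬝ᵥ Q *ᵥ q) / (q ⬝ᵥ Q *ᵥ q)) • q) ⬝ᵥ Q *ᵥ
        (d + (-(d ⬝ᵥ Q *ᵥ q) / (q ⬝ᵥ Q *ᵥ q)) • q) =
      d ⬝ᵥ Q *ᵥ d - (d ⬝ᵥ Q *ᵥ q) ^ 2 / (q ⬝ᵥ Q *ᵥ q) := by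
  rw [hQ.dotProduct_mulVec_add_smul]
  rcases eq_or_ne (q ⬝ᵥ Q *ᵥ q) 0 with hb | hb
  · simp [hb]
  · field_simp
    ring

lemma PosSemidef.dotProduct_mulVec_conjugate_le {Q : Matrix ι ι ℝ} (hQ : Q.PosSemidef)
    (d q : ι → ℝ) :
    (d + (-(d ⬝ᵥ Q *ᵥ q) / (q ⬝ᵥ Q *ᵥ q)) • q) ⬝ᵥ Q *ᵥ
        (d + (-(d ⬝ᵥ Q *ᵥ q) / (q ⬝ᵥ Q *ᵥ q)) • q) ≤ d ⬝ᵥ Q *ᵥ d := by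
  have hsymm : Q.IsSymm := by simpa using hQ.isHermitian
  rw [hsymm.dotProduct_mulVec_conjugate, sub_le_self_iff]
  exact div_nonneg (sq_nonneg _) (by simpa using hQ.dotProduct_mulVec_nonneg q)

end Matrix

theorem csmo_gain_lower_bound_general
    {n : ℕ} (Q : Matrix (Fin n) (Fin n) ℝ) (hQ : Q.PosSemidef)
    (s α : Fin n → ℝ)
    (Θ : (Fin n → ℝ) → ℝ)
    (hΘ : ∀ β, Θ β = (1 / 2) * (β ⬝ᵥ Q.mulVec β) - s ⬝ᵥ β)
    (g : Fin n → ℝ) (hg : g = Q.mulVec α - s)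
    (d pprev : Fin n → ℝ) (horth : g ⬝ᵥ pprev = 0)
    (γstar : ℝ) (hγ : γstar = -(d ⬝ᵥ Q.mulVec pprev) / (pprev ⬝ᵥ Q.mulVec pprev))
    (p : Fin n → ℝ) (hp : p = d + γstar • pprev) (hpQp : 0 < p ⬝ᵥ Q.mulVec p)
    (ρstar : ℝ) (hρ : ρstar = -(g ⬝ᵥ d) / (p ⬝ᵥ Q.mulVec p))
    (κ : ℝ) (hκ : 0 < κ) (hbound : d ⬝ᵥ Q.mulVec d ≤ 1 / (2 * κ)) :
    κ * (g ⬝ᵥ d) ^ 2 ≤ Θ α - Θ (α + ρstar • p) := by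
  have hsymm : Q.IsSymm := by simpa using hQ.isHermitian
  have hgp : g ⬝ᵥ p = g ⬝ᵥ d := by
    rw [hp, dotProduct_add, dotProduct_smul, horth, smul_zero, add_zero]
  have hgain : Θ α - Θ (α + ρstar • p) = (g ⬝ᵥ d) ^ 2 / (2 * (p ⬝ᵥ Q *ᵥ p)) := by
    obtain rfl : Θ = dualObjective Q s := funext hΘ
    rw [hρ, ← hgp, hg, hsymm.dualObjective_sub_exact_step]
  have hcurv : 2 * κ * (p ⬝ᵥ Q *ᵥ p) ≤ 1 := by
    have hle : p ⬝ᵥ Q *ᵥ p ≤ d ⬝ᵥ Q *ᵥ d := hp ▸ hγ ▸ hQ.dotProduct_mulVec_conjugate_le d pprev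
    rw [le_div_iff₀ (by positivity)] at hbound
    calc 2 * κ * (p ⬝ᵥ Q *ᵥ p) ≤ d ⬝ᵥ Q *ᵥ d * (2 * κ) := by
          rw [mul_comm (d ⬝ᵥ Q *ᵥ d)]
          gcongr
      _ ≤ 1 := hbound
  rw [hgain, le_div_iff₀ (by positivity)]
  calc κ * (g ⬝ᵥ d) ^ 2 * (2 * (p ⬝ᵥ Q *ᵥ p))
        = (g ⬝ᵥ d) ^ 2 * (2 * κ * (p ⬝ᵥ Q *ᵥ p)) := by ring
    _ ≤ (g ⬝ᵥ d) ^ 2 := mul_le_of_le_one_right (sq_nonneg _) hcurv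

/-- For Q symmetric PSD, g = Qα − s, gᵀp_prev = 0, dᵀQd > 0,
p_prevᵀQp_prev > 0, γ* = −(dᵀQp_prev)/(p_prevᵀQp_prev), p = d + γ* p_prev with
pᵀQp > 0 and ρ* = −(gᵀd)/(pᵀQp): if κ > 0 satisfies dᵀQd ≤ 1/(2κ), then
Θ(α) − Θ(α + ρ*p) ≥ κ (gᵀd)². -/
theorem csmo_gain_lower_bound
    {n : ℕ} (Q : Matrix (Fin n) (Fin n) ℝ) (hQ : Q.PosSemidef)
    (s α : Fin n → ℝ)
    (Θ : (Fin n → ℝ) → ℝ)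
    (hΘ : ∀ β, Θ β = (1 / 2) * (β ⬝ᵥ Q.mulVec β) - s ⬝ᵥ β)
    (g : Fin n → ℝ) (hg : g = Q.mulVec α - s)
    (d pprev : Fin n → ℝ) (horth : g ⬝ᵥ pprev = 0)
    (hd : 0 < d ⬝ᵥ Q.mulVec d) (hpprev : 0 < pprev ⬝ᵥ Q.mulVec pprev)
    (γstar : ℝ) (hγ : γstar = -(d ⬝ᵥ Q.mulVec pprev) / (pprev ⬝ᵥ Q.mulVec pprev))
    (p : Fin n → ℝ) (hp : p = d + γstar • pprev) (hpQp : 0 < p ⬝ᵥ Q.mulVec p)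
    (ρstar : ℝ) (hρ : ρstar = -(g ⬝ᵥ d) / (p ⬝ᵥ Q.mulVec p))
    (κ : ℝ) (hκ : 0 < κ) (hbound : d ⬝ᵥ Q.mulVec d ≤ 1 / (2 * κ)) :
    κ * (g ⬝ᵥ d) ^ 2 ≤ Θ α - Θ (α + ρstar • p) :=
  csmo_gain_lower_bound_general Q hQ s α Θ hΘ g hg d pprev horth γstar hγ p hp hpQp ρstar hρ κ hκ
    hbound
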